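/- Conversely, if θ(t) is a solution of the spin-orbit equation in m:n spin-orbit resonance (θ(t + 2πn) = θ(t) + 2πm for all t) which additionally satisfies θ(α) = β for some α ∈ {0, π}, β ∈ {0, π/2}, then θ(α + nπ) = β + mπ. -/

import Mathlib

/-!
Reflecting a solution through the point `(α, β)` of the `(t, θ)`-plane, `t ↦ 2β - θ(2α - t)`,
gives again a solution: this uses the symmetries of `r` and `f` about `α` and that
`4α - 4β ∈ 2πℤ`. Both solutions have the same value and velocity at `α`, so by uniqueness for
the ODE `θ(t) = 2β - θ(2α - t)` for all `t`. At `t = α + nπ` this, together with the resonance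
condition at `α - nπ`, gives `2θ(α + nπ) = 2β + 2πm`.
-/

open Real Set

/-- `ODE_solution_unique_univ` with a time-dependent Lipschitz constant: being continuous, it is
bounded on every compact time interval. -/
theorem ODE_solution_unique_univ_of_continuous {E : Type*} [NormedAddCommGroup E]
    [NormedSpace ℝ E] {v : ℝ → E → E} {L : ℝ → NNReal} (hL : Continuous L)
    (hv : ∀ t, LipschitzWith (L t) (v t)) {f g : ℝ → E}
    (hf : ∀ t, HasDerivAt f (v t (f t)) t) (hg : ∀ t, HasDerivAt g (v t (g t)) t)
    {t₀ : ℝ} (heq : f t₀ = g t₀) : f = g := by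
  funext T
  set R := |T - t₀| + 1
  have hR : 0 < R := by positivity
  obtain ⟨t₁, -, hmax⟩ := isCompact_Icc.exists_isMaxOn
    (nonempty_Icc.2 (by linarith : t₀ - R ≤ t₀ + R)) hL.continuousOn
  have hlip : ∀ t ∈ Ioo (t₀ - R) (t₀ + R), LipschitzOnWith (L t₁) (v t) univ :=
    fun t ht => ((hv t).weaken (hmax (Ioo_subset_Icc_self ht))).lipschitzOnWith
  refine ODE_solution_unique_of_mem_Ioo hlip (s := fun _ => univ) ⟨by linarith, by linarith⟩
    (fun t _ => ⟨hf t, trivial⟩) (fun t _ => ⟨hg t, trivial⟩) heq ?_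
  have := abs_sub_lt_iff.1 (lt_add_one |T - t₀|)
  constructor <;> linarith

theorem secondOrder_ODE_solution_unique {E : Type*} [NormedAddCommGroup E]
    [NormedSpace ℝ E] {V : ℝ → E → E} {L : ℝ → NNReal} (hL : Continuous L)
    (hV : ∀ t, LipschitzWith (L t) (V t)) {x x' y y' : ℝ → E}
    (hx : ∀ t, HasDerivAt x (x' t) t) (hx' : ∀ t, HasDerivAt x' (V t (x t)) t)
    (hy : ∀ t, HasDerivAt y (y' t) t) (hy' : ∀ t, HasDerivAt y' (V t (y t)) t)
    {t₀ : ℝ} (h₀ : x t₀ = y t₀) (h₀' : x' t₀ = y' t₀) : x = y := by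
  have hsys := ODE_solution_unique_univ_of_continuous
    (v := fun t p => (p.2, V t p.1)) (L := fun t => max 1 (L t * 1)) (by fun_prop)
    (fun t => LipschitzWith.prod_snd.prodMk ((hV t).comp LipschitzWith.prod_fst))
    (f := fun t => (x t, x' t)) (g := fun t => (y t, y' t))
    (fun t => (hx t).prodMk (hx' t)) (fun t => (hy t).prodMk (hy' t)) (t₀ := t₀)
    (Prod.ext h₀ h₀')
  funext t
  exact congrArg Prod.fst (congrFun hsys t)

theorem lipschitzWith_neg_mul_sin_two_mul_sub (c b : ℝ) :
    LipschitzWith (‖c‖₊ * 2) fun x => -(c * sin (2 * x - b)) := by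
  refine LipschitzWith.of_dist_le_mul fun x y => ?_
  rw [Real.dist_eq, Real.dist_eq, NNReal.coe_mul, coe_nnnorm, Real.norm_eq_abs,
    neg_sub_neg, ← mul_sub, abs_mul]
  calc |c| * |sin (2 * y - b) - sin (2 * x - b)| ≤ |c| * |(2 * y - b) - (2 * x - b)| :=
        mul_le_mul_of_nonneg_left (abs_sin_sub_sin_le _ _) (abs_nonneg c)
    _ = |c| * 2 * |x - y| := by
        rw [show (2 * y - b) - (2 * x - b) = 2 * (y - x) by ring, abs_mul, abs_sub_comm]
        norm_num; ring

/-- `θ'` is the angular velocity and `c t` stands for `(λ / 2) (a / r t) ^ 3`. -/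
def IsSpinOrbitSolution (c f θ θ' : ℝ → ℝ) : Prop :=
  (∀ t, HasDerivAt θ (θ' t) t) ∧ ∀ t, HasDerivAt θ' (-(c t * sin (2 * θ t - 2 * f t))) t

namespace IsSpinOrbitSolution

variable {c f θ θ' : ℝ → ℝ}

theorem unique (hc : Continuous c) {θ₂ θ₂' : ℝ → ℝ} (h₁ : IsSpinOrbitSolution c f θ θ')
    (h₂ : IsSpinOrbitSolution c f θ₂ θ₂') {t₀ : ℝ} (h₀ : θ t₀ = θ₂ t₀)
    (h₀' : θ' t₀ = θ₂' t₀) : θ = θ₂ :=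
  secondOrder_ODE_solution_unique (V := fun t x => -(c t * sin (2 * x - 2 * f t)))
    (L := fun t => ‖c t‖₊ * 2) (by fun_prop)
    (fun t => lipschitzWith_neg_mul_sin_two_mul_sub _ _) h₁.1 h₁.2 h₂.1 h₂.2 h₀ h₀'

/-- Along `t ↦ 2α - t` the reflection replaces `2θ - 2f` by `4β - 4α - (2θ - 2f)`, and
`4β - 4α ∈ 2πℤ`. -/
theorem reflect {α β : ℝ} (k : ℤ) (hk : 2 * α - 2 * β = k * π)
    (hc : ∀ t, c (2 * α - t) = c t) (hf : ∀ t, f (2 * α - t) = 2 * α - f t)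
    (h : IsSpinOrbitSolution c f θ θ') :
    IsSpinOrbitSolution c f (fun t => 2 * β - θ (2 * α - t)) (fun t => θ' (2 * α - t)) := by
  have hrefl (t : ℝ) : HasDerivAt (fun s => 2 * α - s) (-1) t := by
    simpa using (hasDerivAt_id t).const_sub (2 * α)
  refine ⟨fun t => by simpa using ((h.1 _).comp t (hrefl t)).const_sub (2 * β), fun t => ?_⟩
  refine ((h.2 (2 * α - t)).comp t (hrefl t)).congr_deriv ?_
  have hsin (u v : ℝ) : sin (2 * u - 2 * (2 * α - v)) = -sin (2 * (2 * β - u) - 2 * v) := by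
    rw [← sin_neg, show 2 * u - 2 * (2 * α - v) = -(2 * (2 * β - u) - 2 * v) - k * (2 * π) by
      linear_combination -2 * hk]
    exact sin_periodic.sub_int_mul_eq k
  rw [hc, hf, hsin]
  ring

theorem apply_eq_two_mul_sub_apply (hc : Continuous c) {α β : ℝ} (k : ℤ)
    (hk : 2 * α - 2 * β = k * π) (hcα : ∀ t, c (2 * α - t) = c t)
    (hfα : ∀ t, f (2 * α - t) = 2 * α - f t) (h : IsSpinOrbitSolution c f θ θ')
    (hθα : θ α = β) (t : ℝ) : θ t = 2 * β - θ (2 * α - t) := by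
  have hα : 2 * α - α = α := by ring
  have := h.unique hc (h.reflect k hk hcα hfα) (t₀ := α) (by simp only [hα, hθα]; ring)
    (by simp only [hα])
  exact congrFun this t

end IsSpinOrbitSolution

theorem stmt_10_general (a lam α β : ℝ) (m n : ℤ)
    (hα : α = 0 ∨ α = π) (hβ : β = 0 ∨ β = π / 2)
    (r f : ℝ → ℝ) (hrc : Continuous r) (hrpos : ∀ t, 0 < r t)
    (hrsym : ∀ t, r (2 * α - t) = r t)
    (hfsym : ∀ t, f (2 * α - t) = 2 * α - f t)
    (θ θ' θ'' : ℝ → ℝ)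
    (hd1 : ∀ t, HasDerivAt θ (θ' t) t)
    (hd2 : ∀ t, HasDerivAt θ' (θ'' t) t)
    (hode : ∀ t, θ'' t + (lam / 2) * (a / r t) ^ 3 * Real.sin (2 * θ t - 2 * f t) = 0)
    (hres : ∀ t, θ (t + 2 * π * n) = θ t + 2 * π * m)
    (hbc : θ α = β) :
    θ (α + n * π) = β + m * π := by
  set c : ℝ → ℝ := fun t => lam / 2 * (a / r t) ^ 3
  have hc : Continuous c :=
    continuous_const.mul ((continuous_const.div hrc fun t => (hrpos t).ne').pow 3)
  have hsol : IsSpinOrbitSolution c f θ θ' :=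
    ⟨hd1, fun t => by convert hd2 t using 1; simp only [c]; linarith [hode t]⟩
  obtain ⟨k, hk⟩ : ∃ k : ℤ, 2 * α - 2 * β = k * π := by
    rcases hα with rfl | rfl <;> rcases hβ with rfl | rfl
    exacts [⟨0, by simp⟩, ⟨-1, by push_cast; ring⟩, ⟨2, by push_cast; ring⟩,
      ⟨1, by push_cast; ring⟩]
  have hsymm := hsol.apply_eq_two_mul_sub_apply hc k hk (fun t => by simp only [c, hrsym])
    hfsym hbc (α + n * π)
  have hperiod := hres (α - n * π)
  rw [show 2 * α - (α + n * π) = α - n * π by ring] at hsymm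
  rw [show α - n * π + 2 * π * n = α + n * π by ring] at hperiod
  linarith

/-- Conversely: a solution of the spin-orbit equation in m:n spin-orbit resonance which
satisfies θ(α) = β with α ∈ {0, π}, β ∈ {0, π/2} also satisfies θ(α + nπ) = β + mπ. -/
theorem stmt_10 (e a lam α β : ℝ) (he0 : 0 ≤ e) (he1 : e < 1) (ha : 0 < a)
    (m n : ℤ) (hn : n ≠ 0)
    (hα : α = 0 ∨ α = π) (hβ : β = 0 ∨ β = π / 2)
    (r f : ℝ → ℝ) (hrc : Continuous r) (hfc : Continuous f) (hrpos : ∀ t, 0 < r t)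
    (hrsym : ∀ t, r (2 * α - t) = r t)
    (hfsym : ∀ t, f (2 * α - t) = 2 * α - f t)
    (θ θ' θ'' : ℝ → ℝ)
    (hd1 : ∀ t, HasDerivAt θ (θ' t) t)
    (hd2 : ∀ t, HasDerivAt θ' (θ'' t) t)
    (hode : ∀ t, θ'' t + (lam / 2) * (a / r t) ^ 3 * Real.sin (2 * θ t - 2 * f t) = 0)
    (hres : ∀ t, θ (t + 2 * π * n) = θ t + 2 * π * m)
    (hbc : θ α = β) :
    θ (α + n * π) = β + m * π :=
  stmt_10_general a lam α β m n hα hβ r f hrc hrpos hrsym hfsym θ θ' θ'' hd1 hd2 hode hres hbc
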